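/- Let T be a continuous t-norm and L a right continuous L-operation. Then (L⊗T)(f,g) is a continuous d.d.f. for all continuous d.d.f.'s f, g if and only if L satisfies (LS): x < x', y < y' imply L(x,y) < L(x',y'). -/

import Mathlib

open ENNReal Set

/-- A distance distribution function: increasing `f : [0,∞] → [0,1]` with
`f 0 = 0`, `f ∞ = 1`, left continuous on `(0,∞)`. -/
def IsDDF (f : ℝ≥0∞ → ℝ≥0∞) : Prop :=
  Monotone f ∧ (∀ x, f x ≤ 1) ∧ f 0 = 0 ∧ f ⊤ = 1 ∧
    ∀ x : ℝ≥0∞, 0 < x → x < ⊤ → f x = ⨆ y ∈ Set.Iio x, f y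

/-- The largest quasi-inverse `f∨ y = inf {x | f x > y}`. -/
noncomputable def qInv (f : ℝ≥0∞ → ℝ≥0∞) : ℝ≥0∞ → ℝ≥0∞ :=
  fun y => sInf {x | y < f x}

/-- The unit interval `[0,1]` inside `[0,∞]`. -/
def I01 : Set ℝ≥0∞ := Set.Icc 0 1

/-- A left continuous t-norm on `[0,1]`: commutative, associative, increasing in each
place, identity `1`, left continuous in each variable. -/
def IsLeftContTNorm (T : ℝ≥0∞ → ℝ≥0∞ → ℝ≥0∞) : Prop :=
  (∀ p ∈ I01, ∀ q ∈ I01, T p q ∈ I01) ∧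
  (∀ p ∈ I01, ∀ q ∈ I01, T p q = T q p) ∧
  (∀ p ∈ I01, ∀ q ∈ I01, ∀ r ∈ I01, T (T p q) r = T p (T q r)) ∧
  (∀ p ∈ I01, T p 1 = p) ∧
  (∀ q ∈ I01, ∀ p₁ ∈ I01, ∀ p₂ ∈ I01, p₁ ≤ p₂ → T p₁ q ≤ T p₂ q) ∧
  (∀ q ∈ I01, ∀ p ∈ I01, 0 < p → T p q = ⨆ p' ∈ Set.Iio p, T p' q)

/-- A right continuous `L`-operation on `[0,∞]`: commutative, associative, increasing in
each place, identity `0`, right continuous in each variable. -/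
def IsRightContLOp (L : ℝ≥0∞ → ℝ≥0∞ → ℝ≥0∞) : Prop :=
  (∀ x y, L x y = L y x) ∧
  (∀ x y z, L (L x y) z = L x (L y z)) ∧
  (∀ x, L x 0 = x) ∧
  (∀ y x₁ x₂, x₁ ≤ x₂ → L x₁ y ≤ L x₂ y) ∧
  (∀ y x, x < ⊤ → L x y = ⨅ x' ∈ Set.Ioi x, L x' y)

/-- Joint continuity of a t-norm on `[0,1] × [0,1]`. -/
def TNormContinuous (T : ℝ≥0∞ → ℝ≥0∞ → ℝ≥0∞) : Prop :=
  ContinuousOn (fun pq : ℝ≥0∞ × ℝ≥0∞ => T pq.1 pq.2) (I01 ×ˢ I01)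

/-- The tensor-product triangle function:
`(L ⊗ T)(f,g)(x) = sup {T (f r) (g s) | L r s < x}` for `x < ∞`, and `1` at `∞`. -/
noncomputable def tensor (L T : ℝ≥0∞ → ℝ≥0∞ → ℝ≥0∞) (f g : ℝ≥0∞ → ℝ≥0∞) :
    ℝ≥0∞ → ℝ≥0∞ :=
  fun x => if x = ⊤ then 1 else ⨆ r, ⨆ s, ⨆ _ : L r s < x, T (f r) (g s)

/-!
`(L ⊗ T)(f,g)` is left continuous on `(0,∞)` for all d.d.f.'s. Under (LS), right continuity
at `x < ∞` comes from compactness of `[0,∞]²`: pairs `(r, s)` with `L r s < y` and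
`T (f r) (g s) > t` for `y ↓ x` accumulate (along an ultrafilter) at some `(a, b)`, and (LS)
forces `L r s < x` for all `r < a`, `s < b`, so continuity of `T (f ·) (g ·)` gives
`(L ⊗ T)(f,g)(x) ≥ T (f a) (g b) ≥ t`. Left continuity at `∞` is the same limit argument.

If (LS) fails, there are `x < x' < ∞`, `y < y' < ∞` with `L x' y' ≤ L x y`. For the ramps `f`,
`g` vanishing up to `x`, `y` and equal to `1` from `x'`, `y'` on, `(L ⊗ T)(f,g)` only takes the
values `0` and `1`, so it cannot be continuous.
-/

open Filter Topology

/-- Condition (LS) on an `L`-operation. -/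
def SatisfiesLS (L : ℝ≥0∞ → ℝ≥0∞ → ℝ≥0∞) : Prop :=
  ∀ x x' y y' : ℝ≥0∞, x < x' → y < y' → L x y < L x' y'

variable {T L : ℝ≥0∞ → ℝ≥0∞ → ℝ≥0∞} {f g : ℝ≥0∞ → ℝ≥0∞}

lemma mem_I01_of_le_one {p : ℝ≥0∞} (h : p ≤ 1) : p ∈ I01 := ⟨zero_le, h⟩

namespace IsDDF

lemma mem_I01 (hf : IsDDF f) (x : ℝ≥0∞) : f x ∈ I01 := mem_I01_of_le_one (hf.2.1 x)

lemma map_zero (hf : IsDDF f) : f 0 = 0 := hf.2.2.1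

lemma map_top (hf : IsDDF f) : f ⊤ = 1 := hf.2.2.2.1

end IsDDF

namespace IsLeftContTNorm

lemma le_one (hT : IsLeftContTNorm T) {p q : ℝ≥0∞} (hp : p ∈ I01) (hq : q ∈ I01) :
    T p q ≤ 1 :=
  (hT.1 p hp q hq).2

lemma one_one (hT : IsLeftContTNorm T) : T 1 1 = 1 :=
  hT.2.2.2.1 1 (mem_I01_of_le_one le_rfl)

lemma zero_right (hT : IsLeftContTNorm T) {p : ℝ≥0∞} (hp : p ∈ I01) : T p 0 = 0 := by
  have h0 : (0 : ℝ≥0∞) ∈ I01 := mem_I01_of_le_one zero_le_one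
  have h1 : (1 : ℝ≥0∞) ∈ I01 := mem_I01_of_le_one le_rfl
  refine le_antisymm ?_ zero_le
  calc T p 0 ≤ T 1 0 := hT.2.2.2.2.1 0 h0 p hp 1 h1 hp.2
    _ = 0 := by rw [hT.2.1 1 h1 0 h0, hT.2.2.2.1 0 h0]

lemma zero_left (hT : IsLeftContTNorm T) {q : ℝ≥0∞} (hq : q ∈ I01) : T 0 q = 0 := by
  rw [hT.2.1 0 (mem_I01_of_le_one zero_le_one) q hq, hT.zero_right hq]

end IsLeftContTNorm

lemma IsRightContLOp.mono (hL : IsRightContLOp L) {r₁ r₂ s₁ s₂ : ℝ≥0∞} (hr : r₁ ≤ r₂)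
    (hs : s₁ ≤ s₂) : L r₁ s₁ ≤ L r₂ s₂ :=
  calc L r₁ s₁ ≤ L r₂ s₁ := hL.2.2.2.1 s₁ r₁ r₂ hr
    _ = L s₁ r₂ := hL.1 r₂ s₁
    _ ≤ L s₂ r₂ := hL.2.2.2.1 r₂ s₁ s₂ hs
    _ = L r₂ s₂ := hL.1 s₂ r₂

lemma TNormContinuous.continuous_comp (hTc : TNormContinuous T) (hf : IsDDF f)
    (hcf : Continuous f) (hg : IsDDF g) (hcg : Continuous g) :
    Continuous fun p : ℝ≥0∞ × ℝ≥0∞ => T (f p.1) (g p.2) :=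
  hTc.comp_continuous ((hcf.comp continuous_fst).prodMk (hcg.comp continuous_snd))
    fun _ => Set.mk_mem_prod (hf.mem_I01 _) (hg.mem_I01 _)

section MonotoneContinuity

variable {β : Type*} [CompleteLinearOrder β] [TopologicalSpace β] [OrderTopology β]
  {φ : ℝ≥0∞ → β}

lemma Monotone.eq_biSup_Iio_of_continuous (hm : Monotone φ) (hc : Continuous φ) {x : ℝ≥0∞}
    (hx : 0 < x) : φ x = ⨆ y ∈ Iio x, φ y := by
  have : (𝓝[<] x).NeBot := nhdsLT_neBot_of_exists_lt ⟨0, hx⟩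
  rw [tendsto_nhds_unique ((hc.tendsto x).mono_left nhdsWithin_le_nhds) (hm.tendsto_nhdsLT x),
    sSup_image]

lemma Monotone.continuous_of_biSup_Iio_of_biInf_Ioi (hm : Monotone φ)
    (hsup : ∀ x : ℝ≥0∞, 0 < x → φ x = ⨆ y ∈ Iio x, φ y)
    (hinf : ∀ x : ℝ≥0∞, x < ⊤ → φ x = ⨅ y ∈ Ioi x, φ y) : Continuous φ := by
  refine continuous_iff_continuousAt.2 fun x => continuousAt_iff_continuous_left_right.2 ⟨?_, ?_⟩
  · rcases eq_zero_or_pos x with rfl | hx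
    · rw [show Iic (0 : ℝ≥0∞) = {0} from Iic_bot]
      exact continuousWithinAt_singleton
    · have h := hm.tendsto_nhdsLT x
      rw [sSup_image, ← hsup x hx] at h
      rw [← Iio_insert]
      exact continuousWithinAt_insert_self.2 h
  · rcases eq_or_lt_of_le (le_top : x ≤ ⊤) with rfl | hx
    · rw [show Ici (⊤ : ℝ≥0∞) = {⊤} from Ici_top]
      exact continuousWithinAt_singleton
    · have h := hm.tendsto_nhdsGT x
      rw [sInf_image, ← hinf x hx] at h
      rw [← Ioi_insert]
      exact continuousWithinAt_insert_self.2 h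

end MonotoneContinuity

lemma isDDF_of_continuous (hm : Monotone f) (hle : ∀ x, f x ≤ 1) (h0 : f 0 = 0) (htop : f ⊤ = 1)
    (hc : Continuous f) : IsDDF f :=
  ⟨hm, hle, h0, htop, fun _ hx _ => hm.eq_biSup_Iio_of_continuous hc hx⟩

/-- Off the axes, `(a, b)` is a limit of points of the open lower left quadrant. -/
lemma TNormContinuous.le_of_forall_lt (hT : IsLeftContTNorm T) (hTc : TNormContinuous T)
    (hf : IsDDF f) (hcf : Continuous f) (hg : IsDDF g) (hcg : Continuous g) {a b c : ℝ≥0∞}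
    (h : ∀ r < a, ∀ s < b, T (f r) (g s) ≤ c) : T (f a) (g b) ≤ c := by
  rcases eq_zero_or_pos a with rfl | ha
  · rw [hf.map_zero, hT.zero_left (hg.mem_I01 b)]
    exact zero_le
  rcases eq_zero_or_pos b with rfl | hb
  · rw [hg.map_zero, hT.zero_right (hf.mem_I01 a)]
    exact zero_le
  have : (𝓝[<] a).NeBot := nhdsLT_neBot_of_exists_lt ⟨0, ha⟩
  have : (𝓝[<] b).NeBot := nhdsLT_neBot_of_exists_lt ⟨0, hb⟩
  have hlim : Tendsto (fun p : ℝ≥0∞ × ℝ≥0∞ => T (f p.1) (g p.2)) (𝓝[<] a ×ˢ 𝓝[<] b)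
      (𝓝 (T (f a) (g b))) :=
    ((hTc.continuous_comp hf hcf hg hcg).tendsto (a, b)).mono_left
      (nhds_prod_eq (x := a) (y := b) ▸ prod_mono nhdsWithin_le_nhds nhdsWithin_le_nhds)
  exact le_of_tendsto hlim (eventually_of_mem (prod_mem_prod self_mem_nhdsWithin
    self_mem_nhdsWithin) fun p hp => h p.1 hp.1 p.2 hp.2)

lemma SatisfiesLS.lt_of_tendsto (hLS : SatisfiesLS L) {ι : Type*} {l : Filter ι} [l.NeBot]
    {p : ι → ℝ≥0∞ × ℝ≥0∞} {y : ι → ℝ≥0∞} {a : ℝ≥0∞ × ℝ≥0∞} {x : ℝ≥0∞}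
    (hp : Tendsto p l (𝓝 a)) (hy : Tendsto y l (𝓝 x)) (hpy : ∀ᶠ i in l, L (p i).1 (p i).2 < y i) :
    ∀ r < a.1, ∀ s < a.2, L r s < x := by
  intro r hr s hs
  obtain ⟨r', hrr', hr'a⟩ := exists_between hr
  obtain ⟨s', hss', hs'a⟩ := exists_between hs
  have hr' : ∀ᶠ i in l, r' < (p i).1 :=
    ((continuous_fst.tendsto a).comp hp).eventually (lt_mem_nhds hr'a)
  have hs' : ∀ᶠ i in l, s' < (p i).2 :=
    ((continuous_snd.tendsto a).comp hp).eventually (lt_mem_nhds hs'a)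
  have hle : L r' s' ≤ x := ge_of_tendsto hy <| by
    filter_upwards [hr', hs', hpy] with i hri hsi hi
    exact (hLS _ _ _ _ hri hsi).trans hi |>.le
  exact (hLS _ _ _ _ hrr' hss').trans_le hle

section Tensor

lemma tensor_top : tensor L T f g ⊤ = 1 := if_pos rfl

lemma tensor_of_ne_top {x : ℝ≥0∞} (hx : x ≠ ⊤) :
    tensor L T f g x = ⨆ r, ⨆ s, ⨆ _ : L r s < x, T (f r) (g s) :=
  if_neg hx

lemma le_tensor {x r s : ℝ≥0∞} (hx : x ≠ ⊤) (h : L r s < x) :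
    T (f r) (g s) ≤ tensor L T f g x := by
  rw [tensor_of_ne_top hx]
  exact le_iSup_of_le r <| le_iSup_of_le s <| le_iSup_of_le h le_rfl

lemma lt_tensor_iff {x t : ℝ≥0∞} (hx : x ≠ ⊤) :
    t < tensor L T f g x ↔ ∃ r s, L r s < x ∧ t < T (f r) (g s) := by
  simp only [tensor_of_ne_top hx, lt_iSup_iff, exists_prop]

lemma tensor_le_one (hT : IsLeftContTNorm T) (hf : IsDDF f) (hg : IsDDF g) (x : ℝ≥0∞) :
    tensor L T f g x ≤ 1 := by
  rcases eq_or_ne x ⊤ with rfl | hx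
  · exact tensor_top.le
  · rw [tensor_of_ne_top hx]
    exact iSup₂_le fun r s => iSup_le fun _ => hT.le_one (hf.mem_I01 r) (hg.mem_I01 s)

lemma tensor_mono (hT : IsLeftContTNorm T) (hf : IsDDF f) (hg : IsDDF g) :
    Monotone (tensor L T f g) := by
  intro x y hxy
  rcases eq_or_ne y ⊤ with rfl | hy
  · exact tensor_top (L := L) (T := T) ▸ tensor_le_one hT hf hg x
  · rw [tensor_of_ne_top (ne_top_of_le_ne_top hy hxy)]
    exact iSup₂_le fun r s => iSup_le fun h => le_tensor hy (h.trans_le hxy)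

lemma tensor_zero : tensor L T f g 0 = 0 := by
  simp [tensor_of_ne_top zero_ne_top]

lemma tensor_eq_biSup_Iio (hT : IsLeftContTNorm T) (hf : IsDDF f) (hg : IsDDF g)
    {x : ℝ≥0∞} (hx : x < ⊤) : tensor L T f g x = ⨆ y ∈ Iio x, tensor L T f g y := by
  refine le_antisymm ?_ (iSup₂_le fun y hy => tensor_mono hT hf hg hy.le)
  rw [tensor_of_ne_top hx.ne]
  refine iSup₂_le fun r s => iSup_le fun h => ?_
  obtain ⟨y, hy1, hy2⟩ := exists_between h
  exact (le_tensor (hy2.trans hx).ne hy1).trans (le_biSup _ hy2)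

lemma isDDF_tensor (hT : IsLeftContTNorm T) (hf : IsDDF f) (hg : IsDDF g) :
    IsDDF (tensor L T f g) :=
  ⟨tensor_mono hT hf hg, tensor_le_one hT hf hg, tensor_zero, tensor_top,
    fun _ _ hx => tensor_eq_biSup_Iio hT hf hg hx⟩

lemma tensor_top_eq_biSup_Iio (hT : IsLeftContTNorm T) (hTc : TNormContinuous T)
    (hLS : SatisfiesLS L) (hf : IsDDF f) (hcf : Continuous f) (hg : IsDDF g)
    (hcg : Continuous g) : tensor L T f g ⊤ = ⨆ y ∈ Iio ⊤, tensor L T f g y := by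
  refine le_antisymm ?_ (iSup₂_le fun y _ => tensor_mono hT hf hg le_top)
  rw [tensor_top, ← hT.one_one]
  nth_rw 1 [← hf.map_top, ← hg.map_top]
  refine hTc.le_of_forall_lt hT hf hcf hg hcg fun r hr s hs => ?_
  obtain ⟨z, hrz, hz⟩ := exists_between ((hLS r ⊤ s ⊤ hr hs).trans_le le_top)
  exact (le_tensor hz.ne hrz).trans (le_biSup _ hz)

lemma tensor_eq_biInf_Ioi (hT : IsLeftContTNorm T) (hTc : TNormContinuous T)
    (hLS : SatisfiesLS L) (hf : IsDDF f) (hcf : Continuous f) (hg : IsDDF g)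
    (hcg : Continuous g) {x : ℝ≥0∞} (hx : x < ⊤) :
    tensor L T f g x = ⨅ y ∈ Ioi x, tensor L T f g y := by
  refine le_antisymm (le_iInf₂ fun y hy => tensor_mono hT hf hg hy.le)
    (le_of_forall_lt_imp_le_of_dense fun t ht => ?_)
  have hpick : ∀ y, ∃ p : ℝ≥0∞ × ℝ≥0∞,
      y ∈ Ioo x ⊤ → L p.1 p.2 < y ∧ t < T (f p.1) (g p.2) := fun y => by
    by_cases hy : y ∈ Ioo x ⊤
    · obtain ⟨r, s, h⟩ := (lt_tensor_iff hy.2.ne).1 (ht.trans_le (iInf₂_le y hy.1))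
      exact ⟨(r, s), fun _ => h⟩
    · exact ⟨0, fun h => absurd h hy⟩
  choose p hp using hpick
  have : (𝓝[>] x).NeBot := nhdsGT_neBot_of_exists_gt ⟨⊤, hx⟩
  let U := Ultrafilter.of (𝓝[>] x)
  have hUx : ↑U ≤ 𝓝[>] x := Ultrafilter.of_le _
  have hpU : ∀ᶠ y in U, L (p y).1 (p y).2 < y ∧ t < T (f (p y).1) (g (p y).2) :=
    Eventually.mono (hUx (Ioo_mem_nhdsGT hx)) hp
  have hpa : Tendsto p U (𝓝 (U.map p).lim) := (U.map p).le_nhds_lim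
  have hta : t ≤ T (f (U.map p).lim.1) (g (U.map p).lim.2) :=
    ge_of_tendsto ((hTc.continuous_comp hf hcf hg hcg).tendsto _ |>.comp hpa)
      (hpU.mono fun _ h => h.2.le)
  have hLa := hLS.lt_of_tendsto hpa (hUx.trans nhdsWithin_le_nhds) (hpU.mono fun _ h => h.1)
  exact hta.trans <| hTc.le_of_forall_lt hT hf hcf hg hcg fun r hr s hs =>
    le_tensor hx.ne (hLa r hr s hs)

lemma continuous_tensor (hT : IsLeftContTNorm T) (hTc : TNormContinuous T)
    (hLS : SatisfiesLS L) (hf : IsDDF f) (hcf : Continuous f) (hg : IsDDF g)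
    (hcg : Continuous g) : Continuous (tensor L T f g) :=
  (tensor_mono hT hf hg).continuous_of_biSup_Iio_of_biInf_Ioi
    (fun x _ => (lt_or_eq_of_le (le_top : x ≤ ⊤)).elim (tensor_eq_biSup_Iio hT hf hg)
      fun hx => hx ▸ tensor_top_eq_biSup_Iio hT hTc hLS hf hcf hg hcg)
    fun _ hx => tensor_eq_biInf_Ioi hT hTc hLS hf hcf hg hcg hx

lemma tensor_eq_zero_of_le {x y z : ℝ≥0∞} (hT : IsLeftContTNorm T) (hL : IsRightContLOp L)
    (hf : IsDDF f) (hg : IsDDF g) (hfx : ∀ r ≤ x, f r = 0) (hgy : ∀ s ≤ y, g s = 0)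
    (hz : z ≠ ⊤) (hzxy : z ≤ L x y) : tensor L T f g z = 0 := by
  rw [tensor_of_ne_top hz, ENNReal.iSup_eq_zero]
  refine fun r => ENNReal.iSup_eq_zero.2 fun s => ENNReal.iSup_eq_zero.2 fun hrs => ?_
  rcases le_or_gt r x with hr | hr
  · rw [hfx r hr, hT.zero_left (hg.mem_I01 s)]
  rcases le_or_gt s y with hs | hs
  · rw [hgy s hs, hT.zero_right (hf.mem_I01 r)]
  exact absurd ((hzxy.trans (hL.mono hr.le hs.le)).trans_lt hrs) (lt_irrefl z)

lemma tensor_eq_one_of_lt {x y z : ℝ≥0∞} (hT : IsLeftContTNorm T) (hf : IsDDF f)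
    (hg : IsDDF g) (hfx : f x = 1) (hgy : g y = 1) (hz : L x y < z) : tensor L T f g z = 1 := by
  rcases eq_or_ne z ⊤ with rfl | hz'
  · exact tensor_top
  · refine le_antisymm (tensor_le_one hT hf hg z) ?_
    simpa only [hfx, hgy, hT.one_one] using le_tensor (T := T) (f := f) (g := g) hz' hz

end Tensor

noncomputable def ramp (a b r : ℝ≥0∞) : ℝ≥0∞ := min ((r - a) / (b - a)) 1

section Ramp

variable {a b : ℝ≥0∞}

lemma ramp_of_le {r : ℝ≥0∞} (hr : r ≤ a) : ramp a b r = 0 := by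
  simp [ramp, tsub_eq_zero_of_le hr]

lemma ramp_right (hab : a < b) (hb : b < ⊤) : ramp a b b = 1 := by
  rw [ramp, ENNReal.div_self (tsub_pos_of_lt hab).ne' (ENNReal.sub_ne_top hb.ne), min_self]

lemma continuous_ramp (hab : a < b) : Continuous (ramp a b) :=
  ((ENNReal.continuous_div_const _ (tsub_pos_of_lt hab).ne').comp
    (ENNReal.continuous_sub_right a)).min continuous_const

lemma isDDF_ramp (hab : a < b) (hb : b < ⊤) : IsDDF (ramp a b) := by
  refine isDDF_of_continuous (fun r r' h => min_le_min_right _ ?_) (fun _ => min_le_right _ _)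
    (ramp_of_le zero_le) ?_ (continuous_ramp hab)
  · exact ENNReal.div_le_div_right (tsub_le_tsub_right h a) _
  · rw [ramp, ENNReal.top_sub (hab.trans hb).ne,
      ENNReal.top_div_of_ne_top (ENNReal.sub_ne_top hb.ne), min_eq_right le_top]

end Ramp

lemma exists_lt_lt_top_of_not_satisfiesLS (hL : IsRightContLOp L) (hLS : ¬ SatisfiesLS L) :
    ∃ x x' y y', x < x' ∧ x' < ⊤ ∧ y < y' ∧ y' < ⊤ ∧ L x' y' ≤ L x y := by
  simp only [SatisfiesLS, not_forall, not_lt] at hLS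
  obtain ⟨x, x', y, y', hx, hy, hxy⟩ := hLS
  obtain ⟨x'', hx'', hx''x'⟩ := exists_between hx
  obtain ⟨y'', hy'', hy''y'⟩ := exists_between hy
  exact ⟨x, x'', y, y'', hx'', hx''x'.trans_le le_top, hy'', hy''y'.trans_le le_top,
    (hL.mono hx''x'.le hy''y'.le).trans hxy⟩

lemma exists_not_continuous_tensor (hT : IsLeftContTNorm T) (hL : IsRightContLOp L)
    (hLS : ¬ SatisfiesLS L) :
    ∃ f g : ℝ≥0∞ → ℝ≥0∞, IsDDF f ∧ Continuous f ∧ IsDDF g ∧ Continuous g ∧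
      ¬ Continuous (tensor L T f g) := by
  obtain ⟨x, x', y, y', hx, hx', hy, hy', hxy⟩ := exists_lt_lt_top_of_not_satisfiesLS hL hLS
  have hf := isDDF_ramp hx hx'
  have hg := isDDF_ramp hy hy'
  refine ⟨ramp x x', ramp y y', hf, continuous_ramp hx, hg, continuous_ramp hy, fun hc => ?_⟩
  have hvalues : ∀ z, tensor L T (ramp x x') (ramp y y') z ∈ ({0, 1} : Set ℝ≥0∞) := by
    intro z
    rcases le_or_gt z (L x y) with hz | hz
    · rcases eq_or_ne z ⊤ with rfl | hz'
      · exact Or.inr tensor_top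
      · exact Or.inl (tensor_eq_zero_of_le hT hL hf hg (fun _ => ramp_of_le)
          (fun _ => ramp_of_le) hz' hz)
    · exact Or.inr (tensor_eq_one_of_lt hT hf hg (ramp_right hx hx') (ramp_right hy hy')
        (hxy.trans_lt hz))
  obtain ⟨z, hz⟩ := intermediate_value_univ 0 ⊤ hc
    (show (2⁻¹ : ℝ≥0∞) ∈ Icc (tensor L T _ _ 0) (tensor L T _ _ ⊤) by
      rw [tensor_zero, tensor_top]
      exact ⟨zero_le, ENNReal.inv_le_one.2 one_le_two⟩)
  rcases hvalues z with h | h <;> rw [hz] at h <;> norm_num at h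

theorem tensor_preserves_continuous_ddf_iff_LS (T L : ℝ≥0∞ → ℝ≥0∞ → ℝ≥0∞)
    (hT : IsLeftContTNorm T) (hTc : TNormContinuous T) (hL : IsRightContLOp L) :
    (∀ f g : ℝ≥0∞ → ℝ≥0∞, IsDDF f → Continuous f → IsDDF g → Continuous g →
      IsDDF (tensor L T f g) ∧ Continuous (tensor L T f g)) ↔
    (∀ x x' y y' : ℝ≥0∞, x < x' → y < y' → L x y < L x' y') := by
  refine ⟨fun hpres => ?_, fun hLS f g hf hcf hg hcg =>
    ⟨isDDF_tensor hT hf hg, continuous_tensor hT hTc hLS hf hcf hg hcg⟩⟩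
  by_contra hLS
  obtain ⟨f, g, hf, hcf, hg, hcg, hτ⟩ := exists_not_continuous_tensor hT hL hLS
  exact hτ (hpres f g hf hcf hg hcg).2
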